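/- arXiv:2409.00961 — 2 statements merged into one kernel-verified Lean document; each statement's English description precedes it below -/
import Mathlib

section
/- Let H_k be Hamiltonians satisfying (H1)-(H3) converging uniformly on compact sets to a Hamiltonian H satisfying (H1)-(H3), let φ_k be ω-semiconcave functions converging uniformly to φ, and let x_k → x. Then liminf_{k→∞} H_k(x_k, p#_{φ_k,H_k}(x_k)) ≥ H(x, p#_{φ,H}(x)). -/
/-!
Bound `p_k = p#_{φ_k,H_k}(x_k)` first: testing the superdifferential inequality at
`y = x_k - ρ p_k / ‖p_k‖` gives `ρ ‖p_k‖ ≤ φ_k(x_k) - φ_k(y) + ρ ω(ρ)`, and the right side is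
bounded because `φ` is bounded above near `x` (it has a supergradient at `x`) and below near `x`
(Jensen's inequality with error, on a simplex around `x`). Along any ultrafilter finer than
`atTop`, `p_k` then converges to some `a`, the superdifferential inequality passes to the limit,
so `a ∈ D⁺φ(x)` and `H(x, p#(x)) ≤ H(x, a) = lim H_k(x_k, p_k)` by locally uniform convergence.
-/

open MeasureTheory Filter Topology Set

noncomputable section

abbrev En (n : ℕ) := EuclideanSpace ℝ (Fin n)

/-- ω is a modulus: nonnegative, nondecreasing, upper semicontinuous on [0,∞), ω(0⁺)=0. -/
def IsModulus (ω : ℝ → ℝ) : Prop :=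
  (∀ r, 0 ≤ ω r) ∧ MonotoneOn ω (Set.Ici 0) ∧
    UpperSemicontinuousOn ω (Set.Ici 0) ∧
    Tendsto ω (nhdsWithin 0 (Set.Ioi 0)) (nhds 0)

/-- φ is ω-semiconcave on ℝⁿ. -/
def Semiconcave {n : ℕ} (ω : ℝ → ℝ) (φ : En n → ℝ) : Prop :=
  ∀ x y : En n, ∀ l ∈ Set.Icc (0:ℝ) 1,
    l * φ x + (1 - l) * φ y - φ (l • x + (1 - l) • y) ≤
      l * (1 - l) * ‖x - y‖ * ω ‖x - y‖

/-- The (Dini/Fréchet) superdifferential D⁺φ(x) of an ω-semiconcave function. -/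
def superdiff {n : ℕ} (ω : ℝ → ℝ) (φ : En n → ℝ) (x : En n) : Set (En n) :=
  {p | ∀ y, φ y ≤ φ x + (inner ℝ p (y - x) : ℝ) + ‖y - x‖ * ω ‖y - x‖}

/-- Conditions (H1)-(H3) on the Hamiltonian H, with p-gradient Hp. -/
structure HamCond {n : ℕ} (H : En n → En n → ℝ) (Hp : En n → En n → En n) : Prop where
  lip : LocallyLipschitz (Function.uncurry H)
  grad : ∀ x p, HasGradientAt (H x) (Hp x p) p
  contHp : Continuous (Function.uncurry Hp)
  sconv : ∀ x, StrictConvexOn ℝ Set.univ (H x)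
  superlin : ∀ c : ℝ, ∃ R : ℝ, ∀ (x p : En n), R ≤ ‖p‖ → c * ‖p‖ ≤ H x p

/-- The Lagrangian associated to H via the Legendre transform. -/
def Lag {n : ℕ} (H : En n → En n → ℝ) (x v : En n) : ℝ :=
  ⨆ p : En n, ((inner ℝ p v : ℝ) - H x p)

/-- pS is the minimal-energy selection of the superdifferential. -/
def IsMinSel {n : ℕ} (ω : ℝ → ℝ) (φ : En n → ℝ) (H : En n → En n → ℝ)
    (pS : En n → En n) : Prop :=
  ∀ x, pS x ∈ superdiff ω φ x ∧ ∀ q ∈ superdiff ω φ x, H x (pS x) ≤ H x q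


open Metric

theorem TendstoUniformly.mono_left {α β ι : Type*} [UniformSpace β] {F : ι → α → β} {f : α → β}
    {p p' : Filter ι} (h : TendstoUniformly F f p) (hp : p' ≤ p) : TendstoUniformly F f p' :=
  fun u hu => hp (h u hu)

theorem TendstoLocallyUniformly.mono_left {α β ι : Type*} [TopologicalSpace α] [UniformSpace β]
    {F : ι → α → β} {f : α → β} {p p' : Filter ι} (h : TendstoLocallyUniformly F f p)
    (hp : p' ≤ p) : TendstoLocallyUniformly F f p' := fun u hu x =>
  let ⟨t, ht, hev⟩ := h u hu x
  ⟨t, ht, hev.filter_mono hp⟩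

theorem UpperSemicontinuousWithinAt.tendsto_max {α ι : Type*} [TopologicalSpace α] {f : α → ℝ}
    {s : Set α} {x : α} (hf : UpperSemicontinuousWithinAt f s x) {l : Filter ι} {g : ι → α}
    (hg : Tendsto g l (𝓝[s] x)) : Tendsto (fun i => max (f (g i)) (f x)) l (𝓝 (f x)) := by
  refine tendsto_order.2 ⟨fun b hb => .of_forall fun i => hb.trans_le (le_max_right _ _),
    fun b hb => ?_⟩
  filter_upwards [hg.eventually (hf b hb)] with i hi using max_lt hi hb

theorem le_liminf_of_forall_ultrafilter {ι : Type*} {f : Filter ι} [NeBot f] {u : ι → ℝ} {a : ℝ}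
    (h : ∀ U : Ultrafilter ι, ↑U ≤ f → ∃ b, a ≤ b ∧ Tendsto u U (𝓝 b)) : a ≤ liminf u f := by
  have hcobdd : f.IsCoboundedUnder (· ≥ ·) u := by
    obtain ⟨b, -, hb⟩ := h (Ultrafilter.of f) (Ultrafilter.of_le f)
    exact IsCoboundedUnder.of_frequently_le
      ((hb.eventually (eventually_le_nhds (lt_add_one b))).frequently.filter_mono
        (Ultrafilter.of_le f))
  refine le_of_forall_lt_imp_le_of_dense fun c hc => le_liminf_of_le hcobdd ?_
  by_contra hev
  have := frequently_iff_neBot.1 (not_eventually.1 hev)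
  have hU := Ultrafilter.of_le (f ⊓ 𝓟 {i | ¬c ≤ u i})
  obtain ⟨b, hab, hb⟩ := h _ (hU.trans inf_le_left)
  have hbc : b ≤ c := le_of_tendsto hb <|
    mem_of_superset (hU (mem_inf_of_right (mem_principal_self _))) fun i hi => le_of_not_ge hi
  linarith

theorem sub_card_mul_le_of_mem_convexHull {E : Type*} [AddCommGroup E] [Module ℝ E] {f : E → ℝ}
    {s : Set E} (hs : Convex ℝ s) {δ c : ℝ}
    (hf : ∀ a ∈ s, ∀ b ∈ s, ∀ t ∈ Icc (0 : ℝ) 1,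
      t * f a + (1 - t) * f b - δ ≤ f (t • a + (1 - t) • b))
    {T : Finset E} (hTs : ↑T ⊆ s) (hTc : ∀ a ∈ T, c ≤ f a) {y : E}
    (hy : y ∈ convexHull ℝ (T : Set E)) : c - T.card * δ ≤ f y := by
  classical
  induction T using Finset.induction_on generalizing y with
  | empty => simp at hy
  | insert a T haT ih =>
    have has : a ∈ s := hTs (Finset.mem_insert_self a T)
    have hδ : 0 ≤ δ := by simpa using hf a has a has 1 (by simp)
    rw [Finset.card_insert_of_notMem haT, Nat.cast_succ]
    rcases T.eq_empty_or_nonempty with rfl | hT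
    · obtain rfl : y = a := by simpa using hy
      simp only [Finset.card_empty, Nat.cast_zero, zero_add, one_mul]
      linarith [hTc y (by simp)]
    rw [Finset.coe_insert, convexHull_insert (by simpa using hT)] at hy
    obtain ⟨a', ha', z, hz, t, t', ht, ht', htt', rfl⟩ := mem_convexJoin.1 hy
    rw [Set.mem_singleton_iff.1 ha']
    obtain rfl : t' = 1 - t := by linarith
    have hTs' : ↑T ⊆ s := (Finset.coe_subset.2 (Finset.subset_insert a T)).trans hTs
    have hzc := ih hTs' (fun b hb => hTc b (Finset.mem_insert_of_mem hb)) hz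
    have hstep := hf a has z (convexHull_min hTs' hs hz) t ⟨ht, by linarith⟩
    nlinarith [hTc a (Finset.mem_insert_self a T), mul_le_mul_of_nonneg_left hzc ht',
      mul_nonneg ht (mul_nonneg (Nat.cast_nonneg T.card) hδ)]

section Semiconcavity

variable {n : ℕ} {ω : ℝ → ℝ} {φ : En n → ℝ}

theorem IsModulus.monotoneOn_mul (hω : IsModulus ω) : MonotoneOn (fun r => r * ω r) (Ici 0) :=
  fun a ha _ hb hab => mul_le_mul hab (hω.2.1 ha hb hab) (hω.1 a) (le_trans ha hab)

theorem Semiconcave.of_tendsto {ι : Type*} {l : Filter ι} [NeBot l] {φk : ι → En n → ℝ}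
    (hsc : ∀ i, Semiconcave ω (φk i)) (hφ : ∀ y, Tendsto (fun i => φk i y) l (𝓝 (φ y))) :
    Semiconcave ω φ := fun a b t ht =>
  le_of_tendsto ((((hφ a).const_mul t).add ((hφ b).const_mul (1 - t))).sub (hφ _))
    (.of_forall fun i => hsc i a b t ht)

theorem Semiconcave.le_of_norm_sub_le (hω : IsModulus ω) (hφ : Semiconcave ω φ) {a b : En n}
    {D : ℝ} (hab : ‖a - b‖ ≤ D) {t : ℝ} (ht : t ∈ Icc (0 : ℝ) 1) :
    t * φ a + (1 - t) * φ b - D * ω D ≤ φ (t • a + (1 - t) • b) := by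
  have hdefect : ‖a - b‖ * ω ‖a - b‖ ≤ D * ω D :=
    hω.monotoneOn_mul (norm_nonneg _) ((norm_nonneg _).trans hab) hab
  have hweight : t * (1 - t) * (‖a - b‖ * ω ‖a - b‖) ≤ ‖a - b‖ * ω ‖a - b‖ :=
    mul_le_of_le_one_left (mul_nonneg (norm_nonneg _) (hω.1 _)) (by nlinarith [ht.1, ht.2])
  have := hφ a b t ht
  rw [mul_assoc (t * (1 - t))] at this
  linarith

theorem Semiconcave.exists_closedBall_le (hω : IsModulus ω) (hφ : Semiconcave ω φ) (x : En n) :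
    ∃ r > 0, ∃ m, ∀ y ∈ closedBall x r, m ≤ φ y := by
  classical
  obtain ⟨b, hxb, hbs⟩ :=
    exists_mem_interior_convexHull_affineBasis (closedBall_mem_nhds x one_pos)
  obtain ⟨r, hr, hrb⟩ := nhds_basis_closedBall.mem_iff.1 (mem_interior_iff_mem_nhds.1 hxb)
  obtain ⟨c, hc⟩ := (Set.finite_range (φ ∘ b)).bddBelow
  have hT : ((Finset.univ.image b : Finset (En n)) : Set (En n)) = range b := by simp
  refine ⟨r, hr, c - (Finset.univ.image b).card * (2 * ω 2), fun y hy => ?_⟩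
  refine sub_card_mul_le_of_mem_convexHull (convex_closedBall x 1)
    (fun a ha a' ha' t ht => hφ.le_of_norm_sub_le hω ?_ ht) ?_ ?_ ?_
  · rw [← dist_eq_norm]
    linarith [dist_triangle_right a a' x, mem_closedBall.1 ha, mem_closedBall.1 ha']
  · rw [hT]
    exact (subset_convexHull ℝ _).trans hbs
  · simpa using fun i => hc ⟨i, rfl⟩
  · rw [hT]
    exact hrb hy

theorem le_add_mul_of_mem_superdiff (hω : IsModulus ω) {x p y : En n}
    (hp : p ∈ superdiff ω φ x) {D : ℝ} (hD : ‖y - x‖ ≤ D) :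
    φ y ≤ φ x + ‖y - x‖ * (‖p‖ + ω D) := by
  have hinner : inner ℝ p (y - x) ≤ ‖p‖ * ‖y - x‖ := real_inner_le_norm p (y - x)
  have hωD : ω ‖y - x‖ ≤ ω D := hω.2.1 (norm_nonneg _) ((norm_nonneg _).trans hD) hD
  nlinarith [hp y, mul_le_mul_of_nonneg_left hωD (norm_nonneg (y - x))]

theorem upperSemicontinuousAt_of_mem_superdiff (hω : IsModulus ω) {x p : En n}
    (hp : p ∈ superdiff ω φ x) : UpperSemicontinuousAt φ x := by
  intro c hc
  have hbound : Tendsto (fun y => φ x + ‖y - x‖ * (‖p‖ + ω 1)) (𝓝 x) (𝓝 (φ x)) := by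
    have hcont : Continuous fun y : En n => φ x + ‖y - x‖ * (‖p‖ + ω 1) := by fun_prop
    simpa using hcont.tendsto x
  filter_upwards [hbound.eventually (eventually_lt_nhds hc), closedBall_mem_nhds x one_pos]
    with y hy hy1
  exact (le_add_mul_of_mem_superdiff hω hp (mem_closedBall_iff_norm.1 hy1)).trans_lt hy

theorem exists_mul_norm_le_of_mem_superdiff (hω : IsModulus ω) {z p : En n}
    (hp : p ∈ superdiff ω φ z) {ρ : ℝ} (hρ : 0 ≤ ρ) :
    ∃ y, ‖y - z‖ ≤ ρ ∧ ρ * ‖p‖ ≤ φ z - φ y + ρ * ω ρ := by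
  rcases eq_or_ne p 0 with rfl | hp0
  · exact ⟨z, by simpa using hρ, by simpa using mul_nonneg hρ (hω.1 ρ)⟩
  have hyz : z - (ρ / ‖p‖) • p - z = -((ρ / ‖p‖) • p) := by abel
  have hnorm : ‖z - (ρ / ‖p‖) • p - z‖ = ρ := by
    rw [hyz, norm_neg, norm_smul, Real.norm_of_nonneg (by positivity),
      div_mul_cancel₀ _ (norm_ne_zero_iff.2 hp0)]
  have hinner : inner ℝ p (z - (ρ / ‖p‖) • p - z) = -(ρ * ‖p‖) := by
    rw [hyz, inner_neg_right, real_inner_smul_right, real_inner_self_eq_norm_sq]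
    field_simp
  refine ⟨_, hnorm.le, ?_⟩
  have := hp (z - (ρ / ‖p‖) • p)
  rw [hinner, hnorm] at this
  linarith

theorem exists_eventually_norm_le_of_mem_superdiff {ι : Type*} {l : Filter ι} (hω : IsModulus ω)
    (hφ : Semiconcave ω φ) {φk : ι → En n → ℝ} (hφconv : TendstoUniformly φk φ l) {x p : En n}
    (hp : p ∈ superdiff ω φ x) {xk pk : ι → En n} (hx : Tendsto xk l (𝓝 x))
    (hpk : ∀ i, pk i ∈ superdiff ω (φk i) (xk i)) : ∃ C, ∀ᶠ i in l, ‖pk i‖ ≤ C := by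
  obtain ⟨r, hr, m, hm⟩ := hφ.exists_closedBall_le hω x
  have hρ : 0 < r / 2 := half_pos hr
  refine ⟨(φ x + r / 2 * (‖p‖ + ω (r / 2)) + 2 - m + r / 2 * ω (r / 2)) / (r / 2), ?_⟩
  filter_upwards [hx.eventually (closedBall_mem_nhds x hρ),
    tendstoUniformly_iff.1 hφconv 1 one_pos] with i hxi hφi
  obtain ⟨y, hy, hpy⟩ := exists_mul_norm_le_of_mem_superdiff hω (hpk i) hρ.le
  have hxi' : ‖xk i - x‖ ≤ r / 2 := mem_closedBall_iff_norm.1 hxi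
  have hyx : y ∈ closedBall x r := by
    rw [mem_closedBall_iff_norm]
    calc ‖y - x‖ = ‖(y - xk i) + (xk i - x)‖ := by rw [sub_add_sub_cancel]
      _ ≤ ‖y - xk i‖ + ‖xk i - x‖ := norm_add_le _ _
      _ ≤ r := by linarith
  have hupper : ‖xk i - x‖ * (‖p‖ + ω (r / 2)) ≤ r / 2 * (‖p‖ + ω (r / 2)) :=
    mul_le_mul_of_nonneg_right hxi' (add_nonneg (norm_nonneg _) (hω.1 _))
  have h1 := hφi (xk i)
  have h2 := hφi y
  rw [Real.dist_eq, abs_lt] at h1 h2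
  rw [le_div_iff₀ hρ]
  linarith [hm y hyx, le_add_mul_of_mem_superdiff hω hp hxi']

theorem mem_superdiff_of_tendsto {ι : Type*} {l : Filter ι} [NeBot l] (hω : IsModulus ω)
    {φk : ι → En n → ℝ} (hφconv : TendstoUniformly φk φ l) {x : En n}
    (hφx : UpperSemicontinuousAt φ x) {xk pk : ι → En n} {q : En n} (hx : Tendsto xk l (𝓝 x))
    (hq : Tendsto pk l (𝓝 q)) (hpk : ∀ i, pk i ∈ superdiff ω (φk i) (xk i)) :
    q ∈ superdiff ω φ x := by
  intro y
  -- `φ` and `ω` are only upper semicontinuous, so `φ (xk i)` and `ω ‖y - xk i‖` are bounded by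
  -- maxima that do converge.
  have hdist : Tendsto (fun i => dist (φ (xk i)) (φk i (xk i))) l (𝓝 0) :=
    Metric.tendsto_nhds.2 fun ε hε =>
      (tendstoUniformly_iff.1 hφconv ε hε).mono fun i hi => by simpa using hi (xk i)
  have hφmax : Tendsto (fun i => max (φ (xk i)) (φ x)) l (𝓝 (φ x)) :=
    (hφx.upperSemicontinuousWithinAt univ).tendsto_max (by rwa [nhdsWithin_univ])
  have hyx : Tendsto (fun i => y - xk i) l (𝓝 (y - x)) := tendsto_const_nhds.sub hx
  have hωusc : UpperSemicontinuousWithinAt ω (Ici 0) ‖y - x‖ := hω.2.2.1 _ (norm_nonneg _)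
  have hωmax : Tendsto (fun i => max (ω ‖y - xk i‖) (ω ‖y - x‖)) l (𝓝 (ω ‖y - x‖)) :=
    hωusc.tendsto_max
      (tendsto_nhdsWithin_iff.2 ⟨hyx.norm, .of_forall fun i => norm_nonneg _⟩)
  have hbound := ((hφmax.add hdist).add (hq.inner hyx)).add (hyx.norm.mul hωmax)
  rw [add_zero] at hbound
  refine le_of_tendsto_of_tendsto' (hφconv.tendsto_at y) hbound fun i => ?_
  have hφi : φk i (xk i) ≤ φ (xk i) + dist (φ (xk i)) (φk i (xk i)) := by
    rw [dist_comm, Real.dist_eq]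
    linarith [le_abs_self (φk i (xk i) - φ (xk i))]
  have hωi : ‖y - xk i‖ * ω ‖y - xk i‖ ≤ ‖y - xk i‖ * max (ω ‖y - xk i‖) (ω ‖y - x‖) :=
    mul_le_mul_of_nonneg_left (le_max_left _ _) (norm_nonneg _)
  linarith [hpk i y, le_max_left (φ (xk i)) (φ x)]

end Semiconcavity

theorem stmt_6_general {n : ℕ} (ω : ℝ → ℝ) (hω : IsModulus ω)
    (Hk : ℕ → En n → En n → ℝ)
    (H : En n → En n → ℝ) (Hp : En n → En n → En n) (hH : HamCond H Hp)
    (hHconv : TendstoLocallyUniformly (fun k => Function.uncurry (Hk k))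
      (Function.uncurry H) atTop)
    (φk : ℕ → En n → ℝ) (φ : En n → ℝ)
    (hsc : ∀ k, Semiconcave ω (φk k))
    (hφconv : TendstoUniformly φk φ atTop)
    (pSk : ℕ → En n → En n) (hpSk : ∀ k, IsMinSel ω (φk k) (Hk k) (pSk k))
    (pS : En n → En n) (hpS : IsMinSel ω φ H pS)
    (xk : ℕ → En n) (x : En n) (hx : Tendsto xk atTop (𝓝 x)) :
    H x (pS x) ≤ Filter.liminf (fun k => Hk k (xk k) (pSk k (xk k))) atTop := by
  have hφ : Semiconcave ω φ := .of_tendsto hsc hφconv.tendsto_at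
  have hpk : ∀ k, pSk k (xk k) ∈ superdiff ω (φk k) (xk k) := fun k => (hpSk k (xk k)).1
  obtain ⟨C, hC⟩ := exists_eventually_norm_le_of_mem_superdiff hω hφ hφconv (hpS x).1 hx hpk
  refine le_liminf_of_forall_ultrafilter fun U hU => ?_
  obtain ⟨a, -, ha⟩ := (isCompact_closedBall (0 : En n) C).ultrafilter_le_nhds
    (U.map fun k => pSk k (xk k)) (by simpa [Set.preimage, mem_closedBall_zero_iff] using hU hC)
  have hxU := hx.mono_left hU
  have ha_mem : a ∈ superdiff ω φ x := mem_superdiff_of_tendsto hω (hφconv.mono_left hU)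
    (upperSemicontinuousAt_of_mem_superdiff hω (hpS x).1) hxU ha hpk
  exact ⟨H x a, (hpS x).2 a ha_mem, (hHconv.mono_left hU).tendsto_comp
    hH.lip.continuous.continuousAt (hxU.prodMk_nhds ha)⟩

/-- lower semicontinuity of the minimal energy under convergence. -/
theorem stmt_6 {n : ℕ} (ω : ℝ → ℝ) (hω : IsModulus ω)
    (Hk : ℕ → En n → En n → ℝ) (Hpk : ℕ → En n → En n → En n)
    (hHk : ∀ k, HamCond (Hk k) (Hpk k))
    (H : En n → En n → ℝ) (Hp : En n → En n → En n) (hH : HamCond H Hp)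
    (hHconv : TendstoLocallyUniformly (fun k => Function.uncurry (Hk k))
      (Function.uncurry H) atTop)
    (φk : ℕ → En n → ℝ) (φ : En n → ℝ)
    (hsc : ∀ k, Semiconcave ω (φk k))
    (hφconv : TendstoUniformly φk φ atTop)
    (pSk : ℕ → En n → En n) (hpSk : ∀ k, IsMinSel ω (φk k) (Hk k) (pSk k))
    (pS : En n → En n) (hpS : IsMinSel ω φ H pS)
    (xk : ℕ → En n) (x : En n) (hx : Tendsto xk atTop (𝓝 x)) :
    H x (pS x) ≤ Filter.liminf (fun k => Hk k (xk k) (pSk k (xk k))) atTop :=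
  stmt_6_general ω hω Hk H Hp hH hHconv φk φ hsc hφconv pSk hpSk pS hpS xk x hx
end
end

section
/- Let φ be semiconcave, H satisfy (H1)-(H3), with Lagrangian L. For any x: L(x,v) + H(x, p#(x)) ≥ ∂φ(x,v) for all v, where ∂φ(x,v) = min{⟨p,v⟩ : p ∈ D⁺φ(x)} is the directional derivative; moreover equality holds if and only if v = H_p(x, p#(x)). -/
open MeasureTheory Filter Topology Set

noncomputable section

/-- The directional derivative ∂φ(x,v) = min{⟨p,v⟩ : p ∈ D⁺φ(x)} of a semiconcave function. -/
def dirDeriv {n : ℕ} (ω : ℝ → ℝ) (φ : En n → ℝ) (x v : En n) : ℝ :=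
  sInf ((fun p => (inner ℝ p v : ℝ)) '' superdiff ω φ x)


/-!
By Fenchel–Young, `⟪p, v⟫ ≤ L(x, v) + H(x, p)` for every `p`, with equality exactly when
`v = H_p(x, p)`: equality makes `p` a maximizer of `q ↦ ⟪q, v⟫ - H(x, q)`, so its gradient
vanishes; conversely, for `v = H_p(x, p)` the tangent inequality of the convex `H(x, ·)`
shows that `p` attains the supremum defining `L(x, v)`. Since `p# ∈ D⁺φ(x)`,
`∂φ(x, v) ≤ ⟪p#, v⟫ ≤ L(x, v) + H(x, p#)`. For `v = H_p(x, p#)` the first step is also an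
equality: `D⁺φ(x)` is convex and `p#` minimizes `H(x, ·)` on it, so first-order
optimality says `⟪H_p(x, p#), q - p#⟫ ≥ 0` for all `q ∈ D⁺φ(x)`.
-/

open scoped RealInnerProductSpace

section Gradient

variable {E : Type*} [NormedAddCommGroup E] [InnerProductSpace ℝ E] {f : E → ℝ}

theorem bddAbove_range_inner_sub_of_superlinear [ProperSpace E] (hf : Continuous f)
    (hsl : ∀ c : ℝ, ∃ R, ∀ p, R ≤ ‖p‖ → c * ‖p‖ ≤ f p) (v : E) :
    BddAbove (range fun p => ⟪p, v⟫ - f p) := by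
  obtain ⟨R, hR⟩ := hsl ‖v‖
  obtain ⟨M, hM⟩ := (isCompact_closedBall (0 : E) R).bddAbove_image
    ((continuous_id.inner continuous_const).sub hf).continuousOn
  refine ⟨max M 0, ?_⟩
  rintro _ ⟨p, rfl⟩
  rcases le_or_gt ‖p‖ R with hp | hp
  · exact (hM ⟨p, by simpa using hp, rfl⟩).trans (le_max_left _ _)
  · have hvp : ⟪p, v⟫ ≤ ‖v‖ * ‖p‖ := (real_inner_le_norm p v).trans_eq (mul_comm _ _)
    linarith [hR p hp.le, le_max_right M 0]

variable [CompleteSpace E] {g a : E}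

theorem ConvexOn.inner_gradient_le_sub (hf : ConvexOn ℝ univ f) (hg : HasGradientAt f g a)
    (b : E) : ⟪g, b - a⟫ ≤ f b - f a := by
  have hline : HasDerivAt (f ∘ AffineMap.lineMap (k := ℝ) a b) ⟪g, b - a⟫ 0 := by
    have hg' : HasFDerivAt f (InnerProductSpace.toDual ℝ E g)
        (AffineMap.lineMap (k := ℝ) a b 0) := by
      simpa using hg.hasFDerivAt
    simpa using hg'.comp_hasDerivAt (0 : ℝ) AffineMap.hasDerivAt_lineMap
  have h := (hf.comp_affineMap (AffineMap.lineMap a b)).le_slope_of_hasDerivAt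
    (mem_univ 0) (mem_univ 1) one_pos hline
  simpa [slope] using h

theorem IsMinOn.inner_gradient_sub_nonneg {s : Set E} (hmin : IsMinOn f s a)
    (hs : Convex ℝ s) (ha : a ∈ s) (hg : HasGradientAt f g a) {b : E} (hb : b ∈ s) :
    0 ≤ ⟪g, b - a⟫ := by
  have h := hmin.localize.hasFDerivWithinAt_nonneg hg.hasFDerivAt.hasFDerivWithinAt
    (sub_mem_posTangentConeAt_of_segment_subset (hs.segment_subset ha hb))
  simpa using h

theorem IsMaxOn.eq_gradient_of_inner_sub {v : E}
    (hmax : IsMaxOn (fun q => ⟪q, v⟫ - f q) univ a) (hg : HasGradientAt f g a) : v = g := by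
  have hd : HasFDerivAt (fun q => ⟪q, v⟫ - f q)
      (innerSL ℝ v - InnerProductSpace.toDual ℝ E g) a := by
    refine ((innerSL ℝ v).hasFDerivAt.sub hg.hasFDerivAt).congr_of_eventuallyEq
      (Eventually.of_forall fun q => ?_)
    simp [real_inner_comm]
  have h0 := congrArg (fun L : E →L[ℝ] ℝ => L (v - g))
    ((hmax.isLocalMax Filter.univ_mem).hasFDerivAt_eq_zero hd)
  simp only [sub_apply, innerSL_apply_apply, InnerProductSpace.toDual_apply_apply, zero_apply,
    ← inner_sub_left] at h0
  exact sub_eq_zero.mp (inner_self_eq_zero.mp h0)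

end Gradient

section Superdiff

variable {n : ℕ} {ω : ℝ → ℝ} {φ : En n → ℝ} {x : En n}

theorem convex_superdiff : Convex ℝ (superdiff ω φ x) := by
  have h : superdiff ω φ x =
      ⋂ y, {p | φ y - φ x - ‖y - x‖ * ω ‖y - x‖ ≤ ⟪p, y - x⟫} := by
    ext p
    simp only [superdiff, mem_ofPred_eq, mem_iInter]
    exact forall_congr' fun y => by constructor <;> intro h <;> linarith
  rw [h]
  exact convex_iInter fun y => convex_halfSpace_ge ((innerₗ (En n)).flip (y - x)).isLinear _

theorem bddBelow_inner_superdiff (v : En n) :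
    BddBelow ((fun p => ⟪p, v⟫) '' superdiff ω φ x) := by
  refine ⟨φ (x + v) - φ x - ‖v‖ * ω ‖v‖, ?_⟩
  rintro _ ⟨p, hp, rfl⟩
  have h := hp (x + v)
  simp only [add_sub_cancel_left] at h
  linarith

theorem dirDeriv_le_inner {p : En n} (hp : p ∈ superdiff ω φ x) (v : En n) :
    dirDeriv ω φ x v ≤ ⟪p, v⟫ :=
  csInf_le (bddBelow_inner_superdiff v) ⟨p, hp, rfl⟩

end Superdiff

namespace HamCond

variable {n : ℕ} {H : En n → En n → ℝ} {Hp : En n → En n → En n}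

theorem inner_sub_le_lag (hH : HamCond H Hp) (x p v : En n) : ⟪p, v⟫ - H x p ≤ Lag H x v :=
  le_ciSup (bddAbove_range_inner_sub_of_superlinear
    (continuous_iff_continuousAt.2 fun q => (hH.grad x q).differentiableAt.continuousAt)
    (fun c => (hH.superlin c).imp fun _ hR => hR x) v) p

theorem lag_gradient_eq (hH : HamCond H Hp) (x p : En n) :
    Lag H x (Hp x p) = ⟪p, Hp x p⟫ - H x p := by
  refine le_antisymm (ciSup_le fun q => ?_) (hH.inner_sub_le_lag x p _)
  have h := (hH.sconv x).convexOn.inner_gradient_le_sub (hH.grad x p) q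
  rw [inner_sub_right, real_inner_comm p, real_inner_comm q] at h
  linarith

theorem eq_gradient_of_lag_eq (hH : HamCond H Hp) {x p v : En n}
    (h : Lag H x v = ⟪p, v⟫ - H x p) : v = Hp x p :=
  IsMaxOn.eq_gradient_of_inner_sub (fun q _ => (hH.inner_sub_le_lag x q v).trans_eq h)
    (hH.grad x p)

end HamCond

theorem IsMinSel.dirDeriv_gradient_eq {n : ℕ} {ω : ℝ → ℝ} {φ : En n → ℝ}
    {H : En n → En n → ℝ} {Hp : En n → En n → En n} {pS : En n → En n}
    (hpS : IsMinSel ω φ H pS) (hH : HamCond H Hp) (x : En n) :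
    dirDeriv ω φ x (Hp x (pS x)) = ⟪pS x, Hp x (pS x)⟫ := by
  obtain ⟨hmem, hmin⟩ := hpS x
  refine IsLeast.csInf_eq ⟨⟨pS x, hmem, rfl⟩, ?_⟩
  rintro _ ⟨q, hq, rfl⟩
  have h := IsMinOn.inner_gradient_sub_nonneg hmin convex_superdiff hmem (hH.grad x _) hq
  rw [inner_sub_right, real_inner_comm (pS x), real_inner_comm q] at h
  linarith

theorem stmt_11_general {n : ℕ} (ω : ℝ → ℝ)
    (φ : En n → ℝ)
    (H : En n → En n → ℝ) (Hp : En n → En n → En n) (hH : HamCond H Hp)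
    (pS : En n → En n) (hpS : IsMinSel ω φ H pS) (x : En n) :
    (∀ v : En n, dirDeriv ω φ x v ≤ Lag H x v + H x (pS x)) ∧
    (∀ v : En n,
      (Lag H x v + H x (pS x) = dirDeriv ω φ x v ↔ v = Hp x (pS x))) := by
  have hD (v : En n) : dirDeriv ω φ x v ≤ ⟪pS x, v⟫ := dirDeriv_le_inner (hpS x).1 v
  have hFY (v : En n) := hH.inner_sub_le_lag x (pS x) v
  refine ⟨fun v => by linarith [hD v, hFY v], fun v => ⟨fun heq => ?_, ?_⟩⟩
  · exact hH.eq_gradient_of_lag_eq (by linarith [hD v, hFY v])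
  · rintro rfl
    rw [hH.lag_gradient_eq, hpS.dirDeriv_gradient_eq hH]
    ring

/-- L(x,v) + H(x,p#(x)) ≥ ∂φ(x,v), with equality iff v = H_p(x,p#(x)). -/
theorem stmt_11 {n : ℕ} (ω : ℝ → ℝ) (hω : IsModulus ω)
    (φ : En n → ℝ) (hφ : Semiconcave ω φ)
    (H : En n → En n → ℝ) (Hp : En n → En n → En n) (hH : HamCond H Hp)
    (pS : En n → En n) (hpS : IsMinSel ω φ H pS) (x : En n) :
    (∀ v : En n, dirDeriv ω φ x v ≤ Lag H x v + H x (pS x)) ∧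
    (∀ v : En n,
      (Lag H x v + H x (pS x) = dirDeriv ω φ x v ↔ v = Hp x (pS x))) :=
  stmt_11_general ω φ H Hp hH pS hpS x
end
end
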